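/- Let X = {0, 1, abstain}. The majority-testing-with-abstention family of functions (f_n : X^n → {0,1})_{n≥1} defined by f_n(x) = 1 if |{i : x_i = 1}| ≥ |{i : x_i = 0}| and f_n(x) = 0 otherwise, is computable. -/

import Mathlib

/-- A finite bidirectional connected network on `n` nodes, with port labelings:
each node `i` has a bijection between its neighbors and the port numbers
`{0, …, deg(i) - 1}`. -/
structure PortNetwork (n : ℕ) where
  adj : Fin n → Fin n → Bool
  symm : ∀ i j, adj i j → adj j i
  loopless : ∀ i, ¬ adj i i
  connected : ∀ i j : Fin n, Relation.ReflTransGen (fun a b => adj a b) i j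
  port : ∀ i : Fin n, {j // adj i j} ≃ Fin (Fintype.card {j // adj i j})

/-- The degree of node `i`. -/
def PortNetwork.deg {n : ℕ} (N : PortNetwork n) (i : Fin n) : ℕ :=
  Fintype.card {j // N.adj i j}

/-- An algorithm: a family of transition functions
`A_d : X × Z_d × Y × M^d → Z_d × Y × M^d`, together with the distinguished
initial ("∅") elements of `Z_d`, `Y`, `M`. -/
structure Algorithm (X Y M : Type) (Z : ℕ → Type) where
  trans : ∀ d : ℕ, X → Z d → Y → (Fin d → M) → Z d × Y × (Fin d → M)
  z0 : ∀ d, Z d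
  y0 : Y
  m0 : M

/-- The synchronous evolution of the network: `A.run N x t i` is the state
`(z_i(t), y_i(t), (m_{i,p}(t))_p)` of node `i` at time `t`, starting from
initial values `x`.  At each round, node `i` receives through its `k`-th port
the message sent by the neighbor `j_k` on that port, namely the message that
`j_k` put on its own port leading back to `i`. -/
def Algorithm.run {X Y M : Type} {Z : ℕ → Type} (A : Algorithm X Y M Z) {n : ℕ}
    (N : PortNetwork n) (x : Fin n → X) :
    ℕ → ∀ i : Fin n, Z (N.deg i) × Y × (Fin (N.deg i) → M)
  | 0 => fun _ => (A.z0 _, A.y0, fun _ => A.m0)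
  | t + 1 => fun i =>
      A.trans (N.deg i) (x i) (A.run N x t i).1 (A.run N x t i).2.1
        (fun k =>
          let j := (N.port i).symm k
          (A.run N x t j.1).2.2 (N.port j.1 ⟨i, N.symm _ _ j.2⟩))

/-- `y` is the final output of the execution of `A` on the network `N` with
initial values `x`. -/
def Algorithm.FinalOutput {X Y M : Type} {Z : ℕ → Type} (A : Algorithm X Y M Z) {n : ℕ}
    (N : PortNetwork n) (x : Fin n → X) (y : Y) : Prop :=
  ∃ t', ∀ t, t' ≤ t → ∀ i, (A.run N x t i).2.1 = y

/-- A family of functions `(f_n : X^n → Y)_{n ≥ 1}` is computable if there is an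
algorithm with `Y`, `M` and all `Z_d` finite which, on every connected network
with ports and every input, produces the final output `f_n(x)`. -/
def ComputableFamily {X Y : Type} (f : ∀ n, (Fin n → X) → Y) : Prop :=
  ∃ (M : Type) (Z : ℕ → Type) (A : Algorithm X Y M Z),
    Finite Y ∧ Finite M ∧ (∀ d, Finite (Z d)) ∧
    ∀ n, 0 < n → ∀ (N : PortNetwork n) (x : Fin n → X),
      A.FinalOutput N x (f n x)

/-- Computability with infinite memory: `Y` and the `Z_d` are allowed to be
countable (the message alphabet `M` stays finite). -/
def ComputableWithInfiniteMemory {X Y : Type} (f : ∀ n, (Fin n → X) → Y) : Prop :=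
  ∃ (M : Type) (Z : ℕ → Type) (A : Algorithm X Y M Z),
    Countable Y ∧ Finite M ∧ (∀ d, Countable (Z d)) ∧
    ∀ n, 0 < n → ∀ (N : PortNetwork n) (x : Fin n → X),
      A.FinalOutput N x (f n x)

/-- The input alphabet `X = {0, 1, abstain}`. -/
inductive Vote : Type
  | zero : Vote
  | one : Vote
  | abstain : Vote
deriving DecidableEq

/-!
Each value `c ∈ {0, 1}` gets its own channel. In the channel of `c`, every voter for `c` launches
a vote token and every voter for the other value holds a flag. Tokens are forwarded in
round-robin order by a rotor at each node; a flagged node that receives vote tokens loses its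
flag and destroys one of them, so `#votes - #flags` is invariant. In the channel of `1` this
capture also creates a ghost token, which flagged nodes absorb.

The number of tokens never increases, so captures and absorptions eventually stop. From then
on tokens circulate without loss, and by rotor fairness and connectivity, if any are left they
reach every node infinitely often. Then no flag can survive. Hence the channel of a strict
majority keeps tokens forever, and the other channel dies out. On a tie, the last capture in
the channel of `1` leaves a ghost that circulates forever. A node outputs `1` when it hears
channel `1`, `0` when it hears only channel `0`, and otherwise keeps its output.
-/

open Finset Filter

namespace PortNetwork

variable {n : ℕ} (N : PortNetwork n)

def nbr (i : Fin n) (k : Fin (N.deg i)) : Fin n := ((N.port i).symm k).1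

def backPort (i : Fin n) (k : Fin (N.deg i)) : Fin (N.deg (N.nbr i k)) :=
  N.port (N.nbr i k) ⟨i, N.symm _ _ ((N.port i).symm k).2⟩

def receive {α : Type*} (m : ∀ i, Fin (N.deg i) → α) (i : Fin n) (k : Fin (N.deg i)) : α :=
  m (N.nbr i k) (N.backPort i k)

lemma nbr_port {i j : Fin n} (h : N.adj i j) : N.nbr i (N.port i ⟨j, h⟩) = j := by
  simp [nbr]

def reverse (e : Σ i, Fin (N.deg i)) : Σ i, Fin (N.deg i) := ⟨N.nbr e.1 e.2, N.backPort e.1 e.2⟩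

lemma reverse_involutive : Function.Involutive N.reverse := by
  rintro ⟨i, k⟩
  have hback : (N.port (N.nbr i k)).symm (N.backPort i k) =
      ⟨i, N.symm _ _ ((N.port i).symm k).2⟩ := Equiv.symm_apply_apply _ _
  change (⟨_, N.port _ ⟨N.nbr i k, N.symm _ _ ((N.port (N.nbr i k)).symm (N.backPort i k)).2⟩⟩ :
    Σ i, Fin (N.deg i)) = ⟨i, k⟩
  rw [hback]
  exact congrArg (Sigma.mk i) (Equiv.apply_symm_apply _ _)

lemma sum_receive {α : Type*} (m : ∀ i, Fin (N.deg i) → α) (f : α → ℕ) :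
    ∑ i, ∑ k, f (N.receive m i k) = ∑ i, ∑ k, f (m i k) := by
  rw [Finset.sum_sigma' univ (fun i => univ), Finset.sum_sigma' univ (fun i => univ)]
  exact N.reverse_involutive.bijective.sum_comp fun e => f (m e.1 e.2)

lemma deg_eq_zero_of_subsingleton [Subsingleton (Fin n)] (i : Fin n) : N.deg i = 0 :=
  Fintype.card_eq_zero_iff.2 ⟨fun ⟨j, hj⟩ => N.loopless i (Subsingleton.elim j i ▸ hj)⟩

lemma deg_pos [Nontrivial (Fin n)] (i : Fin n) : 0 < N.deg i := by
  obtain ⟨j, hj⟩ := exists_ne i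
  obtain h | ⟨c, hc, _⟩ := Relation.ReflTransGen.cases_head (N.connected i j)
  · exact absurd h.symm hj
  · exact Fintype.card_pos_iff.2 ⟨⟨c, hc⟩⟩

end PortNetwork

lemma Algorithm.run_succ {X Y M : Type} {Z : ℕ → Type} (A : Algorithm X Y M Z) {n : ℕ}
    (N : PortNetwork n) (x : Fin n → X) (t : ℕ) (i : Fin n) :
    A.run N x (t + 1) i = A.trans (N.deg i) (x i) (A.run N x t i).1 (A.run N x t i).2.1
      (N.receive (fun j => (A.run N x t j).2.2) i) := rfl

namespace MajorityWithAbstention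

lemma eventually_eq_zero_of_add_eq {f g : ℕ → ℕ} (h : ∀ᶠ t in atTop, f (t + 1) + g t = f t) :
    ∀ᶠ t in atTop, g t = 0 := by
  obtain ⟨T, hT⟩ := eventually_atTop.1 h
  have hanti : Antitone fun s => f (T + s) :=
    antitone_nat_of_succ_le fun s => by have := hT (T + s) (by omega); rw [← add_assoc]; omega
  obtain ⟨S, hS⟩ := WellFoundedLT.antitone_chain_condition hanti
  filter_upwards [eventually_ge_atTop (T + S)] with t ht
  have h1 := hS (t - T) (by omega)
  have h2 := hS (t - T + 1) (by omega)
  rw [show T + (t - T) = t by omega] at h1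
  rw [show T + (t - T + 1) = t + 1 by omega] at h2
  have := hT t (by omega)
  omega

lemma frequently_atTop_succ {p : ℕ → Prop} :
    (∃ᶠ t in atTop, p (t + 1)) ↔ ∃ᶠ t in atTop, p t := by
  rw [← frequently_map (m := fun t => t + 1), map_add_atTop_eq_nat]

lemma eventually_eq_of_latch {α : Type*} {y : ℕ → α} {p : ℕ → Prop} [DecidablePred p] {c : α}
    (hy : ∀ᶠ t in atTop, y (t + 1) = if p t then c else y t) (hp : ∃ᶠ t in atTop, p t) :
    ∀ᶠ t in atTop, y t = c := by
  obtain ⟨T, hT⟩ := eventually_atTop.1 hy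
  obtain ⟨t₀, ht₀, hpt₀⟩ := frequently_atTop.1 hp T
  refine eventually_atTop.2 ⟨t₀ + 1, fun t ht => ?_⟩
  induction t, ht using Nat.le_induction with
  | base => rw [hT t₀ ht₀, if_pos hpt₀]
  | succ t ht ih => rw [hT t (by omega), ih, ite_self]

section Slot

variable {d r q : ℕ}

/-- The position `(q - r) mod d` of port `q` in the round-robin order that starts at port
`r mod d`. -/
def slot (d r q : ℕ) : ℕ := (q + d - r % d) % d

lemma slot_lt (hd : 0 < d) : slot d r q < d := Nat.mod_lt _ hd

lemma slot_add_mod (hd : 0 < d) : (slot d r q + r) % d = q % d := by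
  have : r % d ≤ q + d := (Nat.mod_lt r hd).le.trans (Nat.le_add_left d q)
  rw [slot, Nat.mod_add_mod, ← Nat.add_mod_mod, Nat.sub_add_cancel this, Nat.add_mod_right]

lemma slot_eq_of_add_mod {s : ℕ} (hs : s < d) (h : (s + r) % d = q % d) : slot d r q = s := by
  have hd : 0 < d := by omega
  have := Nat.ModEq.add_right_cancel' r ((slot_add_mod hd).trans h.symm)
  rwa [Nat.ModEq, Nat.mod_eq_of_lt (slot_lt hd), Nat.mod_eq_of_lt hs] at this

lemma slot_congr {r' : ℕ} (h : r % d = r' % d) : slot d r q = slot d r' q := by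
  rw [slot, slot, h]

lemma slot_add_add {w : ℕ} (hd : 0 < d) (hw : w ≤ slot d r q) :
    slot d (r + w) q + w = slot d r q := by
  have := slot_lt (r := r) (q := q) hd
  rw [slot_eq_of_add_mod (s := slot d r q - w) (by omega)]
  · omega
  · calc (slot d r q - w + (r + w)) % d = (slot d r q + r) % d := by congr 1; omega
      _ = q % d := slot_add_mod hd

lemma card_slot_lt {a : ℕ} (ha : a ≤ d) : #{k : Fin d | slot d r k < a} = a := by
  obtain rfl | hd := d.eq_zero_or_pos
  · simp only [univ_eq_empty, filter_empty, card_empty]; omega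
  calc #{k : Fin d | slot d r k < a}
      = #{j : Fin d | (j : ℕ) < a} := by
        refine card_nbij' (fun k => ⟨slot d r k, slot_lt hd⟩)
          (fun j => ⟨(j + r) % d, Nat.mod_lt _ hd⟩) (fun k hk => by simpa using hk)
          (fun j hj => ?_) (fun k _ => ?_) (fun j _ => ?_)
        · simpa [slot_eq_of_add_mod j.2 (Nat.mod_mod _ _).symm] using hj
        · ext; simp [slot_add_mod hd, Nat.mod_eq_of_lt k.2]
        · ext; exact slot_eq_of_add_mod j.2 (Nat.mod_mod _ _).symm
    _ = a := by rw [Fin.card_filter_val_lt, min_eq_right ha]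

lemma card_slot_mem_Ico {a b : ℕ} (hab : a ≤ b) (hb : b ≤ d) :
    #{k : Fin d | a ≤ slot d r k ∧ slot d r k < b} = b - a := by
  have hsplit := card_filter_add_card_filter_not (s := {k : Fin d | slot d r k < b})
    (fun k => slot d r k < a)
  rw [filter_filter, filter_filter, card_slot_lt hb] at hsplit
  have h1 : ∀ k : Fin d, (slot d r k < b ∧ slot d r k < a) ↔ slot d r k < a := fun k => by omega
  have h2 : ∀ k : Fin d, (slot d r k < b ∧ ¬slot d r k < a) ↔ (a ≤ slot d r k ∧ slot d r k < b) :=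
    fun k => by omega
  simp only [h1, h2, card_slot_lt (hab.trans hb)] at hsplit
  omega

/-- Rotor fairness: while port `q` is missed, its slot drops by `w t`, so it cannot be missed
forever. -/
lemma frequently_slot_lt {r w : ℕ → ℕ} (hd : 0 < d) (hr : ∀ t, r (t + 1) % d = (r t + w t) % d)
    (hw : ∃ᶠ t in atTop, 0 < w t) (q : ℕ) : ∃ᶠ t in atTop, slot d (r t) q < w t := by
  by_contra h
  have hstep : ∀ᶠ t in atTop, slot d (r (t + 1)) q + w t = slot d (r t) q := by
    filter_upwards [not_frequently.1 h] with t ht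
    rw [slot_congr (hr t), slot_add_add hd (not_lt.1 ht)]
  exact hw ((eventually_eq_zero_of_add_eq (f := fun t => slot d (r t) q) hstep).mono
    fun t ht => by omega)

end Slot

/-- The two kinds of tokens of a channel; the message `none` on a port means "no token". -/
inductive Token
  | vote
  | ghost
deriving DecidableEq

instance : Finite Token :=
  Finite.of_surjective (fun b : Bool => if b then Token.ghost else Token.vote)
    (by rintro (_ | _) <;> simp)

section Count

variable {d : ℕ} (ms : Fin d → Option Token)

def count (τ : Token) : ℕ := #{k | ms k = some τ}

def traffic : ℕ := count ms .vote + count ms .ghost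

lemma count_eq_sum (τ : Token) : count ms τ = ∑ k, if ms k = some τ then 1 else 0 :=
  card_filter _ _

lemma traffic_le : traffic ms ≤ d := by
  have hdisj : Disjoint (univ.filter fun k => ms k = some .vote)
      (univ.filter fun k => ms k = some .ghost) :=
    disjoint_filter.2 fun k _ h => by simp [h]
  calc traffic ms = #((univ.filter fun k => ms k = some .vote) ∪
        (univ.filter fun k => ms k = some .ghost)) := (card_union_of_disjoint hdisj).symm
    _ ≤ d := (card_le_univ _).trans_eq (Fintype.card_fin d)

lemma traffic_pos_of_ne_none {k : Fin d} (hk : ms k ≠ none) : 0 < traffic ms := by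
  obtain ⟨τ, hτ⟩ := Option.ne_none_iff_exists'.1 hk
  have : 0 < count ms τ := card_pos.2 ⟨k, by simp [hτ]⟩
  unfold traffic
  cases τ <;> omega

end Count

/-- The memory of a node for one channel: whether it still holds a flag, and the rotor, i.e.
the port at which the next block of outgoing tokens starts. The rotor ranges over
`Fin (d + 1)` so that the type is inhabited for isolated nodes. -/
structure Cell (d : ℕ) where
  flag : Bool
  rotor : Fin (d + 1)
deriving Fintype

def advance {d : ℕ} (r : Fin (d + 1)) (w : ℕ) : Fin (d + 1) := Fin.ofNat (d + 1) ((r + w) % d)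

lemma advance_mod {d : ℕ} (hd : 0 < d) (r : Fin (d + 1)) (w : ℕ) :
    (advance r w : ℕ) % d = (r + w) % d := by
  have := Nat.mod_lt (r + w) hd
  rw [advance, Fin.val_ofNat, Nat.mod_eq_of_lt (by omega : (r + w) % d < d + 1), Nat.mod_mod]

namespace Cell

variable {d : ℕ} (withGhosts : Bool) (c : Cell d) (ms : Fin d → Option Token)

abbrev Captures : Prop := c.flag = true ∧ 0 < count ms .vote

def ghostsOut : ℕ :=
  if c.flag then (if withGhosts ∧ 0 < count ms .vote then 1 else 0) else count ms .ghost

def votesOut : ℕ := if c.Captures ms then count ms .vote - 1 else count ms .vote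

def emitted : ℕ := c.ghostsOut withGhosts ms + c.votesOut ms

def next : Cell d :=
  ⟨c.flag && decide (count ms .vote = 0), advance c.rotor (c.emitted withGhosts ms)⟩

def out (k : Fin d) : Option Token :=
  if slot d c.rotor k < c.ghostsOut withGhosts ms then some .ghost
  else if slot d c.rotor k < c.emitted withGhosts ms then some .vote
  else none

lemma votesOut_add_captures :
    c.votesOut ms + (if c.Captures ms then 1 else 0) = count ms .vote := by
  by_cases h : c.Captures ms
  · rw [votesOut, if_pos h, if_pos h]
    have := h.2
    omega
  · simp [votesOut, h]

lemma ghostsOut_add_absorbed :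
    c.ghostsOut withGhosts ms + (if c.flag then count ms .ghost else 0) =
      count ms .ghost + (if withGhosts ∧ c.Captures ms then 1 else 0) := by
  obtain ⟨_ | _, _⟩ := c <;> cases withGhosts <;> by_cases h : 0 < count ms .vote <;>
    simp [ghostsOut, Captures, h, add_comm]

lemma emitted_le : c.emitted withGhosts ms ≤ traffic ms := by
  obtain ⟨_ | _, _⟩ := c <;> by_cases h : 0 < count ms .vote <;>
    simp only [emitted, ghostsOut, votesOut, Captures, traffic, h, Bool.false_eq_true,
      ↓reduceIte, and_true, and_false, and_self] <;> (try split_ifs) <;> omega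

lemma emitted_eq_traffic (h : c.flag = true → traffic ms = 0) :
    c.emitted withGhosts ms = traffic ms := by
  obtain ⟨_ | _, _⟩ := c
  · simp [emitted, ghostsOut, votesOut, traffic, Captures, add_comm]
  · simp only [traffic, true_implies] at h
    simp [emitted, ghostsOut, votesOut, traffic, show count ms .vote = 0 by omega,
      show count ms .ghost = 0 by omega]

lemma count_out_ghost : count (c.out withGhosts ms) .ghost = c.ghostsOut withGhosts ms := by
  have hle : c.ghostsOut withGhosts ms ≤ d :=
    ((Nat.le_add_right _ _).trans (c.emitted_le withGhosts ms)).trans (traffic_le ms)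
  rw [count, ← card_slot_lt (r := c.rotor) hle]
  refine congrArg card (filter_congr fun k _ => ?_)
  unfold out
  split_ifs <;> simp_all

lemma count_out_vote : count (c.out withGhosts ms) .vote = c.votesOut ms := by
  have hle : c.emitted withGhosts ms ≤ d := (c.emitted_le withGhosts ms).trans (traffic_le ms)
  rw [count, show c.votesOut ms = c.emitted withGhosts ms - c.ghostsOut withGhosts ms by
      unfold emitted; omega,
    ← card_slot_mem_Ico (r := c.rotor) (b := c.emitted withGhosts ms) (Nat.le_add_right _ _)
      hle]
  refine congrArg card (filter_congr fun k _ => ?_)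
  unfold out
  split_ifs <;> simp_all

lemma out_ne_none_iff (k : Fin d) :
    c.out withGhosts ms k ≠ none ↔ slot d c.rotor k < c.emitted withGhosts ms := by
  unfold out emitted
  split_ifs <;>
    simp only [ne_eq, reduceCtorEq, not_false_eq_true, true_iff, not_true_eq_false, false_iff,
      not_lt] <;> omega

end Cell

/-- An execution of the token protocol of one channel on `N`, indexed from the round in which
the initial vote tokens are sent. -/
structure TokenRun {n : ℕ} (N : PortNetwork n) where
  withGhosts : Bool
  cell : ℕ → ∀ i, Cell (N.deg i)
  send : ℕ → ∀ i, Fin (N.deg i) → Option Token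
  send_zero_ne_ghost : ∀ i k, send 0 i k ≠ some .ghost
  cell_succ : ∀ t i, cell (t + 1) i = (cell t i).next withGhosts (N.receive (send t) i)
  send_succ : ∀ t i, send (t + 1) i = (cell t i).out withGhosts (N.receive (send t) i)

namespace TokenRun

variable {n : ℕ} {N : PortNetwork n} (R : TokenRun N)

def inbox (t : ℕ) (i : Fin n) : Fin (N.deg i) → Option Token := N.receive (R.send t) i

def flag (t : ℕ) (i : Fin n) : Bool := (R.cell t i).flag

def numVotes (t : ℕ) : ℕ := ∑ i, count (R.send t i) .vote

def numGhosts (t : ℕ) : ℕ := ∑ i, count (R.send t i) .ghost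

def numTokens (t : ℕ) : ℕ := R.numVotes t + R.numGhosts t

def numFlags (t : ℕ) : ℕ := #{i | R.flag t i}

def numCaptures (t : ℕ) : ℕ := #{i | (R.cell t i).Captures (R.inbox t i)}

def numAbsorbed (t : ℕ) : ℕ := ∑ i, if R.flag t i then count (R.inbox t i) .ghost else 0

section Step

variable (t : ℕ) (i : Fin n)

lemma flag_succ :
    R.flag (t + 1) i = (R.flag t i && decide (count (R.inbox t i) .vote = 0)) := by
  rw [flag, R.cell_succ]; rfl

lemma count_send_succ_vote :
    count (R.send (t + 1) i) .vote = (R.cell t i).votesOut (R.inbox t i) := by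
  rw [R.send_succ]; exact Cell.count_out_vote ..

lemma count_send_succ_ghost :
    count (R.send (t + 1) i) .ghost = (R.cell t i).ghostsOut R.withGhosts (R.inbox t i) := by
  rw [R.send_succ]; exact Cell.count_out_ghost ..

lemma traffic_send_succ :
    traffic (R.send (t + 1) i) = (R.cell t i).emitted R.withGhosts (R.inbox t i) := by
  rw [traffic, count_send_succ_vote, count_send_succ_ghost, Cell.emitted, add_comm]

end Step

lemma sum_count_inbox (t : ℕ) (τ : Token) :
    ∑ i, count (R.inbox t i) τ = ∑ i, count (R.send t i) τ := by
  simp only [count_eq_sum]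
  exact N.sum_receive (R.send t) fun o => if o = some τ then 1 else 0

lemma sum_traffic_send (t : ℕ) : ∑ i, traffic (R.send t i) = R.numTokens t :=
  sum_add_distrib

lemma sum_traffic_inbox (t : ℕ) : ∑ i, traffic (R.inbox t i) = R.numTokens t := by
  rw [← R.sum_traffic_send]
  simp only [traffic, sum_add_distrib, sum_count_inbox]

lemma numVotes_succ_add (t : ℕ) : R.numVotes (t + 1) + R.numCaptures t = R.numVotes t := by
  rw [numVotes, numVotes, ← R.sum_count_inbox t, numCaptures, card_filter, ← sum_add_distrib]
  exact sum_congr rfl fun i _ => by rw [count_send_succ_vote, Cell.votesOut_add_captures]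

lemma numFlags_succ_add (t : ℕ) : R.numFlags (t + 1) + R.numCaptures t = R.numFlags t := by
  simp only [numFlags, numCaptures, card_filter, ← sum_add_distrib]
  refine sum_congr rfl fun i _ => ?_
  rw [flag_succ]
  cases hf : R.flag t i <;> by_cases hv : count (R.inbox t i) .vote = 0 <;>
    simp_all [Cell.Captures, flag, Nat.pos_iff_ne_zero]

lemma numGhosts_succ_add (t : ℕ) : R.numGhosts (t + 1) + R.numAbsorbed t =
    R.numGhosts t + if R.withGhosts then R.numCaptures t else 0 := by
  have hghosts : (if R.withGhosts then R.numCaptures t else 0) =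
      ∑ i, if R.withGhosts ∧ (R.cell t i).Captures (R.inbox t i) then 1 else 0 := by
    cases R.withGhosts <;> simp [numCaptures]
  rw [numGhosts, numGhosts, ← R.sum_count_inbox t, numAbsorbed, hghosts, ← sum_add_distrib,
    ← sum_add_distrib]
  exact sum_congr rfl fun i _ => by
    rw [count_send_succ_ghost]; exact Cell.ghostsOut_add_absorbed ..

lemma numGhosts_zero : R.numGhosts 0 = 0 :=
  sum_eq_zero fun i _ => card_eq_zero.2 (filter_eq_empty_iff.2 fun k _ => R.send_zero_ne_ghost i k)

lemma numAbsorbed_le (t : ℕ) : R.numAbsorbed t ≤ R.numGhosts t := by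
  rw [numAbsorbed, numGhosts, ← R.sum_count_inbox]
  exact sum_le_sum fun i _ => by split_ifs <;> omega

lemma numAbsorbed_eq_zero {t : ℕ} (h : R.numFlags t = 0) : R.numAbsorbed t = 0 := by
  refine sum_eq_zero fun i _ => if_neg fun hi => ?_
  exact (filter_eq_empty_iff.1 (card_eq_zero.1 h)) (mem_univ i) hi

lemma numVotes_add_numFlags_zero (t : ℕ) :
    R.numVotes t + R.numFlags 0 = R.numVotes 0 + R.numFlags t := by
  induction t with
  | zero => rfl
  | succ t ih => have := R.numVotes_succ_add t; have := R.numFlags_succ_add t; omega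

lemma numTokens_antitone : Antitone R.numTokens := by
  refine antitone_nat_of_succ_le fun t => ?_
  have := R.numVotes_succ_add t
  have := R.numGhosts_succ_add t
  unfold numTokens
  split_ifs at this <;> omega

lemma numGhosts_eq_zero_of_not_withGhosts (hw : R.withGhosts = false) (t : ℕ) :
    R.numGhosts t = 0 := by
  induction t with
  | zero => exact R.numGhosts_zero
  | succ t ih =>
    have := R.numGhosts_succ_add t
    rw [hw, if_neg Bool.false_ne_true] at this
    omega

/-- With ghosts, the capture of the last flag leaves a ghost behind. -/
lemma numGhosts_add_numFlags_pos (hw : R.withGhosts = true) (h : 0 < R.numFlags 0) (t : ℕ) :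
    0 < R.numGhosts t + R.numFlags t := by
  induction t with
  | zero => omega
  | succ t ih =>
    have hg := R.numGhosts_succ_add t
    have hf := R.numFlags_succ_add t
    have ha := R.numAbsorbed_le t
    rw [hw, if_pos rfl] at hg
    obtain h0 | h0 := Nat.eq_zero_or_pos (R.numFlags t)
    · have := R.numAbsorbed_eq_zero h0; omega
    · omega

lemma numTokens_pos_of_lt (h : R.numFlags 0 < R.numVotes 0) (t : ℕ) : 0 < R.numTokens t := by
  have := R.numVotes_add_numFlags_zero t
  unfold numTokens; omega

lemma numTokens_pos_of_withGhosts (hw : R.withGhosts = true) (h0 : 0 < R.numVotes 0)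
    (h : R.numFlags 0 ≤ R.numVotes 0) (t : ℕ) : 0 < R.numTokens t := by
  obtain hlt | heq := h.lt_or_eq
  · exact R.numTokens_pos_of_lt hlt t
  · have := R.numVotes_add_numFlags_zero t
    have := R.numGhosts_add_numFlags_pos hw (heq ▸ h0) t
    unfold numTokens; omega

lemma eventually_numCaptures_eq_zero : ∀ᶠ t in atTop, R.numCaptures t = 0 :=
  eventually_eq_zero_of_add_eq (Eventually.of_forall R.numFlags_succ_add)

lemma eventually_numAbsorbed_eq_zero : ∀ᶠ t in atTop, R.numAbsorbed t = 0 := by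
  refine eventually_eq_zero_of_add_eq (f := R.numGhosts) ?_
  filter_upwards [R.eventually_numCaptures_eq_zero] with t ht
  simpa [ht] using R.numGhosts_succ_add t

/-- Once captures and absorptions have stopped, flagged nodes receive nothing. -/
lemma eventually_traffic_eq_zero_of_flag :
    ∀ᶠ t in atTop, ∀ i, R.flag t i → traffic (R.inbox t i) = 0 := by
  filter_upwards [R.eventually_numCaptures_eq_zero, R.eventually_numAbsorbed_eq_zero]
    with t hc ha i hi
  have hv : ¬0 < count (R.inbox t i) .vote := fun hv =>
    filter_eq_empty_iff.1 (card_eq_zero.1 hc) (mem_univ i) ⟨hi, hv⟩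
  have hg := sum_eq_zero_iff.1 ha i (mem_univ i)
  rw [if_pos hi] at hg
  unfold traffic; omega

lemma frequently_send_ne_none {i : Fin n} (hi : ∃ᶠ t in atTop, 0 < traffic (R.send t i))
    (k : Fin (N.deg i)) : ∃ᶠ t in atTop, R.send t i k ≠ none := by
  have hd : 0 < N.deg i := k.pos
  rw [← frequently_atTop_succ] at hi ⊢
  simp only [R.send_succ, Cell.out_ne_none_iff]
  refine frequently_slot_lt hd (fun t => ?_) ?_ k
  · rw [R.cell_succ]; exact advance_mod hd _ _
  · simp only [traffic_send_succ] at hi; exact hi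

lemma frequently_inbox_of_frequently_send {i : Fin n}
    (hi : ∃ᶠ t in atTop, 0 < traffic (R.send t i)) : ∃ᶠ t in atTop, 0 < traffic (R.inbox t i) := by
  rw [← frequently_atTop_succ] at hi
  refine hi.mono fun t ht => ?_
  rw [traffic_send_succ] at ht
  exact ht.trans_le (Cell.emitted_le ..)

lemma frequently_send_of_frequently_inbox {i : Fin n}
    (hi : ∃ᶠ t in atTop, 0 < traffic (R.inbox t i)) : ∃ᶠ t in atTop, 0 < traffic (R.send t i) := by
  rw [← frequently_atTop_succ]
  refine (hi.and_eventually R.eventually_traffic_eq_zero_of_flag).mono fun t ⟨ht, hflag⟩ => ?_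
  rwa [traffic_send_succ, Cell.emitted_eq_traffic _ _ _ (hflag i)]

/-- Messages travel along an edge infinitely often because the sender's rotor visits every
port. -/
lemma frequently_send_of_adj {i j : Fin n} (hij : N.adj i j)
    (hi : ∃ᶠ t in atTop, 0 < traffic (R.send t i)) : ∃ᶠ t in atTop, 0 < traffic (R.send t j) := by
  have hji := N.symm i j hij
  set k := N.port j ⟨i, hji⟩
  refine R.frequently_send_of_frequently_inbox ?_
  rw [← N.nbr_port hji] at hi
  exact (R.frequently_send_ne_none hi (N.backPort j k)).mono fun t ht =>
    traffic_pos_of_ne_none _ (k := k) ht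

theorem frequently_inbox_of_numTokens_pos (h : ∀ t, 0 < R.numTokens t) (i : Fin n) :
    ∃ᶠ t in atTop, 0 < traffic (R.inbox t i) := by
  have hsome : ∃ᶠ t in atTop, ∃ j, 0 < traffic (R.send t j) :=
    Eventually.frequently <| Eventually.of_forall fun t => by
      obtain ⟨j, _, hj⟩ := sum_pos_iff.1 ((h t).trans_eq (R.sum_traffic_send t).symm)
      exact ⟨j, hj⟩
  obtain ⟨j, hj⟩ := frequently_exists.1 hsome
  refine R.frequently_inbox_of_frequently_send ?_
  induction N.connected j i with
  | refl => exact hj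
  | tail _ hadj ih => exact R.frequently_send_of_adj hadj ih

/-- A flag that survives until the traffic has settled is never reached again, which
contradicts liveness. -/
lemma exists_numFlags_eq_zero (h : ∀ t, 0 < R.numTokens t) : ∃ t, R.numFlags t = 0 := by
  obtain ⟨T, hT⟩ := eventually_atTop.1 R.eventually_traffic_eq_zero_of_flag
  refine ⟨T, card_eq_zero.2 (filter_eq_empty_iff.2 fun i _ hi => ?_)⟩
  have hkeep : ∀ t, T ≤ t → R.flag t i := by
    intro t ht
    induction t, ht using Nat.le_induction with
    | base => exact hi
    | succ t ht ih =>
      have := hT t ht i ih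
      rw [flag_succ, ih, Bool.true_and, decide_eq_true_iff]
      unfold traffic at this; omega
  obtain ⟨t, ht, hpos⟩ := frequently_atTop.1 (R.frequently_inbox_of_numTokens_pos h i) T
  exact hpos.ne' (hT t ht i (hkeep t ht))

lemma traffic_inbox_eq_zero {t₀ : ℕ} (h : R.numTokens t₀ = 0) {t : ℕ} (ht : t₀ ≤ t) (i : Fin n) :
    traffic (R.inbox t i) = 0 := by
  have := R.numTokens_antitone ht
  rw [← R.sum_traffic_inbox t] at this
  have hsum : ∑ j, traffic (R.inbox t j) = 0 := by omega
  exact sum_eq_zero_iff.1 hsum i (mem_univ i)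

lemma eventually_silent_or_numTokens_pos :
    (∀ᶠ t in atTop, ∀ i, traffic (R.inbox t i) = 0) ∨ ∀ t, 0 < R.numTokens t := by
  by_cases h : ∃ t₀, R.numTokens t₀ = 0
  · obtain ⟨t₀, h⟩ := h
    exact Or.inl (eventually_atTop.2 ⟨t₀, fun t ht => R.traffic_inbox_eq_zero h ht⟩)
  · exact Or.inr fun t => Nat.pos_of_ne_zero fun h0 => h ⟨t, h0⟩

theorem eventually_silent_of_lt (h : R.numVotes 0 < R.numFlags 0) :
    ∀ᶠ t in atTop, ∀ i, traffic (R.inbox t i) = 0 := by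
  refine R.eventually_silent_or_numTokens_pos.resolve_right fun hpos => ?_
  obtain ⟨T, hT⟩ := R.exists_numFlags_eq_zero hpos
  have := R.numVotes_add_numFlags_zero T
  omega

theorem eventually_silent_of_not_withGhosts (hw : R.withGhosts = false)
    (h : R.numVotes 0 ≤ R.numFlags 0) :
    ∀ᶠ t in atTop, ∀ i, traffic (R.inbox t i) = 0 := by
  refine R.eventually_silent_or_numTokens_pos.resolve_right fun hpos => ?_
  obtain ⟨T, hT⟩ := R.exists_numFlags_eq_zero hpos
  have h1 := R.numVotes_add_numFlags_zero T
  have h2 := R.numGhosts_eq_zero_of_not_withGhosts hw T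
  have h3 := hpos T
  unfold numTokens at h3
  omega

end TokenRun

def voteOf : Bool → Vote
  | true => .one
  | false => .zero

def majority {n : ℕ} (x : Fin n → Vote) : Fin 2 :=
  if #{i | x i = .zero} ≤ #{i | x i = .one} then 1 else 0

/-- Whether the first round is over, and one cell for each channel. -/
abbrev Memory (d : ℕ) := Bool × (Bool → Cell d)

abbrev Message := Bool → Option Token

def initCell (d : ℕ) (v : Vote) (c : Bool) : Cell d := ⟨decide (v = voteOf !c), 0⟩

def initMessage {d : ℕ} (v : Vote) (k : Fin d) (c : Bool) : Option Token :=
  if v = voteOf c ∧ (k : ℕ) = 0 then some .vote else none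

def initOutput (v : Vote) : Fin 2 := if v = .zero then 0 else 1

def nextOutput {d : ℕ} (y : Fin 2) (ms : Fin d → Message) : Fin 2 :=
  if 0 < traffic fun k => ms k true then 1 else if 0 < traffic fun k => ms k false then 0 else y

/-- The channel index `c` doubles as the `withGhosts` parameter of its cells. -/
def majorityAlgorithm : Algorithm Vote (Fin 2) Message Memory where
  trans d v z y ms :=
    if z.1 then
      ((true, fun c => (z.2 c).next c fun k => ms k c), nextOutput y ms,
        fun k c => (z.2 c).out c (fun k => ms k c) k)
    else ((true, initCell d v), initOutput v, fun k c => initMessage v k c)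
  z0 _ := (false, fun _ => ⟨false, 0⟩)
  y0 := 1
  m0 _ := none

section Execution

variable {n : ℕ} (N : PortNetwork n) (x : Fin n → Vote)

lemma run_add_two (t : ℕ) (i : Fin n) :
    majorityAlgorithm.run N x (t + 1 + 1) i =
      let s := majorityAlgorithm.run N x (t + 1) i
      let ms := N.receive (fun j => (majorityAlgorithm.run N x (t + 1) j).2.2) i
      ((true, fun c => (s.1.2 c).next c fun k => ms k c), nextOutput s.2.1 ms,
        fun k c => (s.1.2 c).out c (fun k => ms k c) k) := by
  refine (Algorithm.run_succ ..).trans (if_pos ?_)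
  rw [Algorithm.run_succ]
  dsimp only [majorityAlgorithm]
  split_ifs <;> rfl

def channelRun (c : Bool) : TokenRun N where
  withGhosts := c
  cell t i := (majorityAlgorithm.run N x (t + 1) i).1.2 c
  send t i k := (majorityAlgorithm.run N x (t + 1) i).2.2 k c
  send_zero_ne_ghost i k := by
    change initMessage (x i) k c ≠ _
    unfold initMessage
    split_ifs <;> simp
  cell_succ t i := by rw [run_add_two]; rfl
  send_succ t i := by simp only [run_add_two]; rfl

/-- The output of the nodes after round `t + 1`. -/
def output (t : ℕ) (i : Fin n) : Fin 2 := (majorityAlgorithm.run N x (t + 1) i).2.1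

lemma output_succ (t : ℕ) (i : Fin n) :
    output N x (t + 1) i =
      if 0 < traffic ((channelRun N x true).inbox t i) then 1
      else if 0 < traffic ((channelRun N x false).inbox t i) then 0
      else output N x t i := by
  rw [output, run_add_two]; rfl

lemma numFlags_channelRun_zero (c : Bool) :
    (channelRun N x c).numFlags 0 = #{i | x i = voteOf !c} := by
  simp [TokenRun.numFlags, TokenRun.flag, channelRun, Algorithm.run, majorityAlgorithm, initCell]

lemma numVotes_channelRun_zero [Nontrivial (Fin n)] (c : Bool) :
    (channelRun N x c).numVotes 0 = #{i | x i = voteOf c} := by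
  rw [TokenRun.numVotes, card_filter]
  refine sum_congr rfl fun i _ => ?_
  have hport : ({k | (k : ℕ) = 0} : Finset (Fin (N.deg i))) = {⟨0, N.deg_pos i⟩} := by
    ext k; simp [Fin.ext_iff]
  by_cases hv : x i = voteOf c
  · simp [count, channelRun, Algorithm.run, majorityAlgorithm, initMessage, hv, hport]
  · simp [count, channelRun, Algorithm.run, majorityAlgorithm, initMessage, hv]

lemma channelRun_counts_zero [Nontrivial (Fin n)] :
    (channelRun N x true).numVotes 0 = #{i | x i = .one} ∧
      (channelRun N x true).numFlags 0 = #{i | x i = .zero} ∧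
      (channelRun N x false).numVotes 0 = #{i | x i = .zero} ∧
      (channelRun N x false).numFlags 0 = #{i | x i = .one} :=
  ⟨numVotes_channelRun_zero .., numFlags_channelRun_zero .., numVotes_channelRun_zero ..,
    numFlags_channelRun_zero ..⟩

end Execution

section Output

variable {n : ℕ} (N : PortNetwork n) (x : Fin n → Vote)

lemma output_eq_initOutput (h : ∀ c t i, traffic ((channelRun N x c).inbox t i) = 0) (t : ℕ)
    (i : Fin n) : output N x t i = initOutput (x i) := by
  induction t with
  | zero => rfl
  | succ t ih => rw [output_succ, h, h, if_neg (lt_irrefl 0), if_neg (lt_irrefl 0), ih]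

lemma output_eq_majority_of_subsingleton [Subsingleton (Fin n)] (t : ℕ) (i : Fin n) :
    output N x t i = majority x := by
  have hsilent : ∀ c t i, traffic ((channelRun N x c).inbox t i) = 0 := fun c t i =>
    Nat.le_zero.1 ((traffic_le _).trans_eq (N.deg_eq_zero_of_subsingleton i))
  have hcard : ∀ v, #{j | x j = v} = if x i = v then 1 else 0 := by
    intro v
    rw [eq_singleton_iff_unique_mem.2 ⟨mem_univ i, fun j _ => Subsingleton.elim j i⟩,
      filter_singleton]
    split_ifs <;> rfl
  rw [output_eq_initOutput N x hsilent, majority, hcard, hcard]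
  cases x i <;> rfl

lemma eventually_output_eq_zero [Nontrivial (Fin n)] (h : #{i | x i = .one} < #{i | x i = .zero}) :
    ∀ᶠ t in atTop, ∀ i, output N x t i = 0 := by
  obtain ⟨hA, hA', hB, hB'⟩ := channelRun_counts_zero N x
  have hsilent := (channelRun N x true).eventually_silent_of_lt (by omega)
  refine eventually_all.2 fun i => eventually_eq_of_latch ?_
    ((channelRun N x false).frequently_inbox_of_numTokens_pos
      ((channelRun N x false).numTokens_pos_of_lt (by omega)) i)
  filter_upwards [hsilent] with t ht
  rw [output_succ, ht i, if_neg (lt_irrefl 0)]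

lemma eventually_output_eq_one [Nontrivial (Fin n)] (h : #{i | x i = .zero} ≤ #{i | x i = .one})
    (hpos : 0 < #{i | x i = .one}) : ∀ᶠ t in atTop, ∀ i, output N x t i = 1 := by
  obtain ⟨hA, hA', hB, hB'⟩ := channelRun_counts_zero N x
  have hsilent := (channelRun N x false).eventually_silent_of_not_withGhosts rfl (by omega)
  refine eventually_all.2 fun i => eventually_eq_of_latch ?_
    ((channelRun N x true).frequently_inbox_of_numTokens_pos
      ((channelRun N x true).numTokens_pos_of_withGhosts rfl (by omega) (by omega)) i)
  filter_upwards [hsilent] with t ht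
  rw [output_succ, ht i, if_neg (lt_irrefl 0)]

lemma output_eq_one_of_no_votes [Nontrivial (Fin n)] (h0 : #{i | x i = .zero} = 0)
    (h1 : #{i | x i = .one} = 0) (t : ℕ) (i : Fin n) : output N x t i = 1 := by
  have hsilent : ∀ c t i, traffic ((channelRun N x c).inbox t i) = 0 := by
    intro c t i
    refine (channelRun N x c).traffic_inbox_eq_zero ?_ (Nat.zero_le t) i
    obtain ⟨hA, -, hB, -⟩ := channelRun_counts_zero N x
    rw [TokenRun.numTokens, TokenRun.numGhosts_zero, add_zero]
    cases c
    exacts [hB.trans h0, hA.trans h1]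
  have hx : x i ≠ .zero := fun hx =>
    notMem_empty i (card_eq_zero.1 h0 ▸ mem_filter.2 ⟨mem_univ i, hx⟩)
  rw [output_eq_initOutput N x hsilent, initOutput, if_neg hx]

theorem eventually_output_eq_majority : ∀ᶠ t in atTop, ∀ i, output N x t i = majority x := by
  obtain hsub | hnt := subsingleton_or_nontrivial (Fin n)
  · exact Eventually.of_forall (output_eq_majority_of_subsingleton N x)
  rw [majority]
  split_ifs with h
  · obtain h1 | h1 := Nat.eq_zero_or_pos #{i | x i = .one}
    · exact Eventually.of_forall (output_eq_one_of_no_votes N x (by omega) h1)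
    · exact eventually_output_eq_one N x h h1
  · exact eventually_output_eq_zero N x (not_le.1 h)

end Output

end MajorityWithAbstention

open MajorityWithAbstention

/-- majority testing with abstention (is
`|{i : x_i = 1}| ≥ |{i : x_i = 0}|`?) is computable. -/
theorem majority_with_abstention_computable :
    ComputableFamily
      (fun n (x : Fin n → Vote) =>
        if (Finset.univ.filter fun i => x i = Vote.zero).card ≤
            (Finset.univ.filter fun i => x i = Vote.one).card
        then (1 : Fin 2) else 0) := by
  refine ⟨Message, Memory, majorityAlgorithm, inferInstance, inferInstance,
    fun _ => inferInstance, fun n _ N x => ?_⟩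
  obtain ⟨T, hT⟩ := eventually_atTop.1 (eventually_output_eq_majority N x)
  refine ⟨T + 1, fun t ht i => ?_⟩
  obtain ⟨s, rfl⟩ : ∃ s, t = s + 1 := ⟨t - 1, by omega⟩
  exact hT s (by omega) i
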